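/- Let n be even, p = e^{-ε} with 0 < ε ≤ 1, and c = p/(1-p)². Define β_0 = Σ over ξ ∈ {-1,0,1}ⁿ with Σ_i ξ_i = 0 of Π_i a_{ξ_i}, where a_0 = 1+2c and a_{±1} = c. Then β_0 ≥ C(n, n/2)·c^n ≥ (2c)ⁿ/(n+1), and since 2c > 1 for ε ≤ 1, β_0 grows exponentially in n. -/

import Mathlib

open scoped BigOperators

/-- Lower bound on `β₀`, the zero-sum coefficient mass of the multivariate
debiasing operator (with signs corrected, `a_{±1} = c ≥ 0`):
`β₀ ≥ C(n, n/2)·cⁿ ≥ (2c)ⁿ/(n+1)`, and `2c > 1` for `ε ≤ 1`. -/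
theorem beta_zero_exponential_lower_bound
    (ε p c : ℝ) (hε0 : 0 < ε) (hε1 : ε ≤ 1) (hp : p = Real.exp (-ε))
    (hc : c = p / (1 - p) ^ 2) (n : ℕ) (hn : Even n)
    (a : ℤ → ℝ) (ha : ∀ ξ : ℤ, a ξ = if ξ = 0 then 1 + 2 * c else c) :
    ((n.choose (n / 2) : ℝ) * c ^ n ≤
        ∑ ξ ∈ Finset.filter (fun ξ : Fin n → ℤ => (∑ i, ξ i) = 0)
          (Fintype.piFinset fun _ : Fin n => ({-1, 0, 1} : Finset ℤ)),
          ∏ i, a (ξ i)) ∧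
      (2 * c) ^ n / (n + 1) ≤ (n.choose (n / 2) : ℝ) * c ^ n ∧
      1 < 2 * c := by
  classical
  have hp0 : 0 < p := by rw [hp]; exact Real.exp_pos _
  have hp1 : p < 1 := by
    rw [hp]
    calc Real.exp (-ε) < Real.exp 0 := Real.exp_lt_exp.mpr (by linarith)
      _ = 1 := Real.exp_zero
  have hq : (0:ℝ) < (1 - p) ^ 2 := pow_pos (by linarith) 2
  have hc0 : 0 < c := by
    rw [hc]; exact div_pos hp0 hq
  -- Part 3
  have hple : Real.exp (-1) ≤ p := by
    rw [hp]; exact Real.exp_le_exp.mpr (by linarith)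
  have hexp : (0.36 : ℝ) < Real.exp (-1) := by
    rw [Real.exp_neg]
    rw [lt_inv_comm₀ (by norm_num) (Real.exp_pos 1)]
    calc Real.exp 1 < 2.7182818286 := Real.exp_one_lt_d9
      _ < (0.36:ℝ)⁻¹ := by norm_num
  have hp36 : (0.36 : ℝ) < p := lt_of_lt_of_le hexp hple
  have h2c : 1 < 2 * c := by
    have hcq : c * (1 - p) ^ 2 = p := by rw [hc]; exact div_mul_cancel₀ p hq.ne'
    nlinarith [hcq, hq, hp36, hp1, sq_nonneg (1 - p)]
  -- Part 2
  have h4 : 2 ^ n ≤ (n + 1) * n.choose (n / 2) := by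
    calc 2 ^ n = ∑ i ∈ Finset.range (n + 1), n.choose i := (Nat.sum_range_choose n).symm
      _ ≤ ∑ i ∈ Finset.range (n + 1), n.choose (n / 2) :=
        Finset.sum_le_sum fun i _ => Nat.choose_le_middle i n
      _ = (n + 1) * n.choose (n / 2) := by
        rw [Finset.sum_const, Finset.card_range, smul_eq_mul]
  have hpart2 : (2 * c) ^ n / (n + 1) ≤ (n.choose (n / 2) : ℝ) * c ^ n := by
    rw [div_le_iff₀ (by positivity)]
    have hcast : (2:ℝ) ^ n ≤ ((n:ℝ) + 1) * (n.choose (n / 2) : ℝ) := by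
      exact_mod_cast h4
    have hcn : (0:ℝ) ≤ c ^ n := by positivity
    calc (2 * c) ^ n = 2 ^ n * c ^ n := by rw [mul_pow]
      _ ≤ (((n:ℝ) + 1) * (n.choose (n / 2) : ℝ)) * c ^ n :=
        mul_le_mul_of_nonneg_right hcast hcn
      _ = (n.choose (n / 2) : ℝ) * c ^ n * ((n:ℝ) + 1) := by ring
  -- Part 1
  have ha_nonneg : ∀ ξ : ℤ, 0 ≤ a ξ := by
    intro ξ; rw [ha]; split <;> linarith
  set S := Finset.filter (fun ξ : Fin n → ℤ => (∑ i, ξ i) = 0)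
      (Fintype.piFinset fun _ : Fin n => ({-1, 0, 1} : Finset ℤ)) with hS
  set f : Finset (Fin n) → (Fin n → ℤ) := fun s i => if i ∈ s then 1 else -1 with hf
  have hsum : ∀ s : Finset (Fin n), (∑ i, f s i) = 2 * (s.card : ℤ) - n := by
    intro s
    have he : ∀ i, f s i = (if i ∈ s then (2:ℤ) else 0) - 1 := by
      intro i; simp only [hf]; split <;> ring
    simp_rw [he]
    rw [Finset.sum_sub_distrib, Finset.sum_ite_mem, Finset.univ_inter,
      Finset.sum_const, Finset.sum_const, Finset.card_univ, Fintype.card_fin]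
    push_cast; ring
  have hmem : ∀ s ∈ Finset.univ.powersetCard (n / 2), f s ∈ S := by
    intro s hs
    rw [Finset.mem_powersetCard] at hs
    rw [hS, Finset.mem_filter]
    constructor
    · rw [Fintype.mem_piFinset]
      intro i
      simp only [hf]
      split <;> simp
    · rw [hsum s, hs.2]
      obtain ⟨k, hk⟩ := hn
      have : n / 2 = k := by omega
      rw [this]; push_cast; omega
  have hprod : ∀ s : Finset (Fin n), (∏ i, a (f s i)) = c ^ n := by
    intro s
    have : ∀ i : Fin n, a (f s i) = c := by
      intro i
      rw [ha]
      simp only [hf]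
      split <;> norm_num
    rw [Finset.prod_congr rfl (fun i _ => this i), Finset.prod_const,
      Finset.card_univ, Fintype.card_fin]
  have hinj : ∀ s ∈ Finset.univ.powersetCard (n / 2),
      ∀ t ∈ Finset.univ.powersetCard (n / 2), f s = f t → s = t := by
    intro s _ t _ h
    ext i
    have hi := congrFun h i
    simp only [hf] at hi
    by_cases h1 : i ∈ s <;> by_cases h2 : i ∈ t <;>
      simp [h1, h2] at hi ⊢ <;> omega
  have hsub : (Finset.univ.powersetCard (n / 2)).image f ⊆ S := by
    intro ξ hξ
    obtain ⟨s, hs, rfl⟩ := Finset.mem_image.mp hξ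
    exact hmem s hs
  refine ⟨?_, hpart2, h2c⟩
  calc (n.choose (n / 2) : ℝ) * c ^ n
      = ∑ _s ∈ (Finset.univ : Finset (Fin n)).powersetCard (n / 2), c ^ n := by
        rw [Finset.sum_const, Finset.card_powersetCard, Finset.card_univ,
          Fintype.card_fin, nsmul_eq_mul]
    _ = ∑ s ∈ Finset.univ.powersetCard (n / 2), ∏ i, a (f s i) := by
        exact Finset.sum_congr rfl fun s _ => (hprod s).symm
    _ = ∑ ξ ∈ (Finset.univ.powersetCard (n / 2)).image f, ∏ i, a (ξ i) := by
        rw [Finset.sum_image hinj]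
    _ ≤ ∑ ξ ∈ S, ∏ i, a (ξ i) := by
        apply Finset.sum_le_sum_of_subset_of_nonneg hsub
        intro ξ _ _
        exact Finset.prod_nonneg fun i _ => ha_nonneg _
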